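/- Let h : [0,∞) → [0,∞) be a non-increasing function and suppose there exists r > 0 such that ∫_t^∞ h(s) ds ≤ r·h(t) for all t ≥ 0. Then h(t) ≤ h(0)·e^{1 - t/r} for all t ≥ r. -/

import Mathlib

open MeasureTheory Real Set Filter Topology

/-!
Write `F t = ∫_t^∞ h`. Since `h` is non-increasing, `F a ≥ F b + (b - a) h(b)`, and the
hypothesis `F b ≤ r h(b)` turns this into `F b (1 + (b - a)/r) ≤ F a`. Iterating over a
partition of `[0, x]` into `n` equal steps and letting `n → ∞` gives `F x e^{x/r} ≤ F 0 ≤ r h(0)`.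
Finally `r h(t) ≤ F (t - r)`, again by monotonicity, which yields the bound.
-/

lemma mul_one_add_pow_le_of_step {F : ℝ → ℝ} {c δ : ℝ} (hc : 0 ≤ c) (hδ : 0 ≤ δ)
    (hF : ∀ a b, 0 ≤ a → a ≤ b → F b * (1 + c * (b - a)) ≤ F a) (n : ℕ) :
    F (n * δ) * (1 + c * δ) ^ n ≤ F 0 := by
  induction n with
  | zero => simp
  | succ n ih =>
    have hstep := hF (n * δ) ((n + 1 : ℕ) * δ) (by positivity) (by gcongr; omega)
    have hlen : ((n + 1 : ℕ) * δ : ℝ) - n * δ = δ := by push_cast; ring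
    rw [hlen] at hstep
    calc F ((n + 1 : ℕ) * δ) * (1 + c * δ) ^ (n + 1)
        = F ((n + 1 : ℕ) * δ) * (1 + c * δ) * (1 + c * δ) ^ n := by ring
      _ ≤ F (n * δ) * (1 + c * δ) ^ n := by gcongr
      _ ≤ F 0 := ih

lemma mul_exp_le_of_step {F : ℝ → ℝ} {c : ℝ} (hc : 0 ≤ c)
    (hF : ∀ a b, 0 ≤ a → a ≤ b → F b * (1 + c * (b - a)) ≤ F a) {x : ℝ} (hx : 0 ≤ x) :
    F x * exp (c * x) ≤ F 0 := by
  have hlim : Tendsto (fun n : ℕ => F x * (1 + c * x / n) ^ n) atTop (𝓝 (F x * exp (c * x))) :=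
    (tendsto_one_add_div_pow_exp (c * x)).const_mul (F x)
  refine le_of_tendsto hlim (eventually_atTop.2 ⟨1, fun n hn => ?_⟩)
  have hn : (n : ℝ) ≠ 0 := by positivity
  have := mul_one_add_pow_le_of_step hc (div_nonneg hx n.cast_nonneg) hF n
  rwa [mul_div_cancel₀ x hn, ← mul_div_assoc] at this

lemma AntitoneOn.sub_mul_add_integral_Ici_le {h : ℝ → ℝ} {a b : ℝ}
    (hmono : AntitoneOn h (Ici a)) (hint : IntegrableOn h (Ici a)) (hab : a ≤ b) :
    (b - a) * h b + ∫ s in Ici b, h s ≤ ∫ s in Ici a, h s := by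
  rw [integral_Ici_eq_integral_Ioi, integral_Ici_eq_integral_Ioi, ← le_sub_iff_add_le,
    intervalIntegral.integral_Ioi_sub_Ioi (hint.mono_set Ioi_subset_Ici_self) hab]
  have hmono' : AntitoneOn h (uIcc a b) := hmono.mono (uIcc_of_le hab ▸ Icc_subset_Ici_self)
  calc (b - a) * h b = ∫ _ in a..b, h b := by rw [intervalIntegral.integral_const, smul_eq_mul]
    _ ≤ ∫ s in a..b, h s :=
      intervalIntegral.integral_mono_on hab intervalIntegrable_const hmono'.intervalIntegrable
        fun x hx => hmono hx.1 hab hx.2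

theorem stmt_0 (h : ℝ → ℝ) (r : ℝ) (hr : 0 < r)
    (hnonneg : ∀ t, 0 ≤ t → 0 ≤ h t)
    (hmono : AntitoneOn h (Ici 0))
    (hint : ∀ t, 0 ≤ t → IntegrableOn h (Ici t))
    (hineq : ∀ t, 0 ≤ t → ∫ s in Ici t, h s ≤ r * h t) :
    ∀ t, r ≤ t → h t ≤ h 0 * Real.exp (1 - t / r) := by
  set F : ℝ → ℝ := fun t => ∫ s in Ici t, h s
  have hdrop : ∀ a b, 0 ≤ a → a ≤ b → (b - a) * h b + F b ≤ F a := fun a b ha hab =>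
    (hmono.mono (Ici_subset_Ici.2 ha)).sub_mul_add_integral_Ici_le (hint a ha) hab
  have hstep : ∀ a b, 0 ≤ a → a ≤ b → F b * (1 + r⁻¹ * (b - a)) ≤ F a := by
    intro a b ha hab
    have hFb : r⁻¹ * F b ≤ h b := (inv_mul_le_iff₀ hr).2 (hineq b (ha.trans hab))
    nlinarith [hdrop a b ha hab, mul_le_mul_of_nonneg_left hFb (sub_nonneg.2 hab)]
  intro t ht
  have hE : exp (r⁻¹ * (t - r)) * exp (1 - t / r) = 1 := by
    rw [← exp_add, show r⁻¹ * (t - r) + (1 - t / r) = 0 by field_simp; ring, exp_zero]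
  have hFt : 0 ≤ F t := setIntegral_nonneg measurableSet_Ici fun s hs =>
    hnonneg s (hr.le.trans (ht.trans hs))
  have hdecay : r * (h t * exp (r⁻¹ * (t - r))) ≤ r * h 0 :=
    calc r * (h t * exp (r⁻¹ * (t - r))) = (t - (t - r)) * h t * exp (r⁻¹ * (t - r)) := by ring
      _ ≤ F (t - r) * exp (r⁻¹ * (t - r)) := by
        gcongr; linarith [hdrop (t - r) t (by linarith) (by linarith)]
      _ ≤ F 0 := mul_exp_le_of_step (inv_nonneg.2 hr.le) hstep (by linarith)
      _ ≤ r * h 0 := hineq 0 le_rfl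
  calc h t = h t * exp (r⁻¹ * (t - r)) * exp (1 - t / r) := by rw [mul_assoc, hE, mul_one]
    _ ≤ h 0 * exp (1 - t / r) := by gcongr; exact le_of_mul_le_mul_left hdecay hr
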